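/- arXiv:2312.00458 — 7 statements merged into one kernel-verified Lean document; each statement's English description precedes it below -/
import Mathlib

section
/- Small model property for ADT₁: for every adt t over Prop with cd(t) ≤ 1, the language ⟦t⟧ is nonempty if and only if there exists a trace τ ∈ ⟦t⟧ whose length is at most |t|. -/
namespace ADTpaper

/-- Propositional formulas over a set `P` of propositional variables. -/
inductive PropForm (P : Type) : Type where
  | var : P → PropForm P
  | tru : PropForm P
  | fls : PropForm P
  | neg : PropForm P → PropForm P
  | conj : PropForm P → PropForm P → PropForm P
  | disj : PropForm P → PropForm P → PropForm P

/-- A valuation is a subset of `P` (an element of the alphabet `Σ = 2^P`). -/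
abbrev Val (P : Type) : Type := Set P

/-- A trace is a finite word over the alphabet `Σ = 2^P`. -/
abbrev Trace (P : Type) : Type := List (Val P)

/-- Satisfaction of a propositional formula by a valuation. -/
def PropForm.eval {P : Type} (v : Val P) : PropForm P → Prop
  | .var p => p ∈ v
  | .tru => True
  | .fls => False
  | .neg φ => ¬ PropForm.eval v φ
  | .conj φ ψ => PropForm.eval v φ ∧ PropForm.eval v ψ
  | .disj φ ψ => PropForm.eval v φ ∨ PropForm.eval v ψ

/-- Size of a propositional formula. -/
def PropForm.size {P : Type} : PropForm P → ℕ
  | .var _ => 1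
  | .tru => 1
  | .fls => 1
  | .neg φ => PropForm.size φ + 1
  | .conj φ ψ => PropForm.size φ + PropForm.size ψ + 1
  | .disj φ ψ => PropForm.size φ + PropForm.size ψ + 1

/-- Attack-defense trees over `P` (operators taken binary, w.l.o.g. by associativity). -/
inductive ADT (P : Type) : Type where
  | eps  : ADT P
  | leaf : PropForm P → ADT P
  | orA  : ADT P → ADT P → ADT P
  | sand : ADT P → ADT P → ADT P
  | andA : ADT P → ADT P → ADT P
  | cm   : ADT P → ADT P → ADT P

/-- Trace semantics of an adt: a language over the alphabet `Σ = 2^P`. -/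
def sem {P : Type} : ADT P → Language (Val P)
  | .eps => 1
  | .leaf γ => {w | ∃ w' v, w = w' ++ [v] ∧ PropForm.eval v γ}
  | .orA t₁ t₂ => sem t₁ ⊔ sem t₂
  | .sand t₁ t₂ => sem t₁ * sem t₂
  | .andA t₁ t₂ => (sem t₁ * ⊤ ⊓ sem t₂) ⊔ (sem t₂ * ⊤ ⊓ sem t₁)
  | .cm t₁ t₂ => sem t₁ \ sem t₂

/-- Countermeasure-depth of an adt. -/
def cd {P : Type} : ADT P → ℕ
  | .eps => 0
  | .leaf _ => 0
  | .orA t₁ t₂ => max (cd t₁) (cd t₂)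
  | .sand t₁ t₂ => max (cd t₁) (cd t₂)
  | .andA t₁ t₂ => max (cd t₁) (cd t₂)
  | .cm t₁ t₂ => max (cd t₁) (cd t₂ + 1)

/-- The size of an adt: the sum of the sizes of its leaves, the leaf `ε` having size 1. -/
def ADT.size {P : Type} : ADT P → ℕ
  | .eps => 1
  | .leaf γ => PropForm.size γ
  | .orA t₁ t₂ => ADT.size t₁ + ADT.size t₂
  | .sand t₁ t₂ => ADT.size t₁ + ADT.size t₂
  | .andA t₁ t₂ => ADT.size t₁ + ADT.size t₂
  | .cm t₁ t₂ => ADT.size t₁ + ADT.size t₂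

/-!
A trace `τ ∈ ⟦t⟧` has a *core* of at most `|t|` positions: deleting any letters of `τ` outside
the core keeps the trace in `⟦t⟧`, so the subword formed by the core alone is a member of length at
most `|t|`. Cores combine along `OR`, `SAND` and `AND` with their sizes adding up; a leaf needs
only its last position. For a countermeasure `C(t₁, t₂)` with `cd t₂ = 0` one adds the last
position to a core of `t₁`: the language of a countermeasure-free tree is closed under inserting
letters before the last one, so a subword keeping the last letter cannot enter `⟦t₂⟧` when `τ`
itself is outside it.
-/

section Subword

open scoped List

variable {α : Type*}

noncomputable def posShift (S : Finset ℕ) (n : ℕ) : Finset ℕ :=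
  S.preimage (· + n) (add_left_injective n).injOn

@[simp]
lemma mem_posShift {S : Finset ℕ} {n i : ℕ} : i ∈ posShift S n ↔ i + n ∈ S :=
  Finset.mem_preimage

lemma posShift_zero (S : Finset ℕ) : posShift S 0 = S := by
  ext; simp

lemma posShift_posShift (S : Finset ℕ) (m n : ℕ) :
    posShift (posShift S m) n = posShift S (n + m) := by
  ext; simp [add_assoc]

lemma card_posShift_one_add_le (S : Finset ℕ) :
    (posShift S 1).card + (if 0 ∈ S then 1 else 0) ≤ S.card := by
  have hsub : (posShift S 1).map (addRightEmbedding 1) ⊆ S.erase 0 := by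
    intro i hi
    obtain ⟨j, hj, rfl⟩ := Finset.mem_map.1 hi
    simpa using mem_posShift.1 hj
  have := Finset.card_le_card hsub
  rw [Finset.card_map] at this
  split_ifs with h0
  · rw [Finset.card_erase_of_mem h0] at this
    have := Finset.card_pos.2 ⟨0, h0⟩
    omega
  · exact this.trans Finset.card_erase_le

noncomputable def subword : List α → Finset ℕ → List α
  | [], _ => []
  | a :: l, S => if 0 ∈ S then a :: subword l (posShift S 1) else subword l (posShift S 1)

@[simp]
lemma subword_nil (S : Finset ℕ) : subword ([] : List α) S = [] := rfl

lemma subword_cons (a : α) (l : List α) (S : Finset ℕ) :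
    subword (a :: l) S =
      if 0 ∈ S then a :: subword l (posShift S 1) else subword l (posShift S 1) :=
  rfl

lemma subword_append (u w : List α) (S : Finset ℕ) :
    subword (u ++ w) S = subword u S ++ subword w (posShift S u.length) := by
  induction u generalizing S with
  | nil => simp [posShift_zero]
  | cons a u ih =>
    simp only [List.cons_append, subword_cons, ih, posShift_posShift, List.length_cons]
    split_ifs <;> rfl

lemma subword_singleton_of_mem (a : α) {S : Finset ℕ} (h : 0 ∈ S) : subword [a] S = [a] := by
  simp [subword_cons, h]

lemma subword_sublist (τ : List α) (S : Finset ℕ) : subword τ S <+ τ := by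
  induction τ generalizing S with
  | nil => simp
  | cons a l ih =>
    rw [subword_cons]
    split_ifs
    · exact (ih _).cons_cons a
    · exact (ih _).cons a

lemma length_subword_le_card (τ : List α) (S : Finset ℕ) : (subword τ S).length ≤ S.card := by
  induction τ generalizing S with
  | nil => simp
  | cons a l ih =>
    have hS := card_posShift_one_add_le S
    have hl := ih (posShift S 1)
    rw [subword_cons]
    split_ifs at hS ⊢
    · rw [List.length_cons]; omega
    · omega

end Subword

section Core

open scoped List

variable {α : Type*}

def HasCore (L : Language α) (τ : List α) (n : ℕ) : Prop :=
  ∃ S : Finset ℕ, S.card ≤ n ∧ ∀ S', S ⊆ S' → subword τ S' ∈ L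

lemma HasCore.exists_mem_length_le {L : Language α} {τ : List α} {n : ℕ} (h : HasCore L τ n) :
    ∃ σ ∈ L, σ.length ≤ n := by
  obtain ⟨S, hS, hcore⟩ := h
  exact ⟨subword τ S, hcore S subset_rfl, (length_subword_le_card τ S).trans hS⟩

lemma HasCore.mono {L L' : Language α} {τ : List α} {n n' : ℕ} (h : HasCore L τ n) (hL : L ≤ L')
    (hn : n ≤ n') : HasCore L' τ n' := by
  obtain ⟨S, hS, hcore⟩ := h
  exact ⟨S, hS.trans hn, fun S' hS' => hL (hcore S' hS')⟩

lemma hasCore_nil {L : Language α} (h : [] ∈ L) : HasCore L [] 0 :=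
  ⟨∅, le_rfl, fun _ _ => h⟩

lemma hasCore_top (τ : List α) : HasCore ⊤ τ 0 :=
  ⟨∅, le_rfl, fun _ _ => trivial⟩

lemma hasCore_append_singleton {L : Language α} {w : List α} {a : α}
    (h : ∀ w', w' <+ w → w' ++ [a] ∈ L) : HasCore L (w ++ [a]) 1 := by
  refine ⟨{w.length}, by simp, fun S' hS' => ?_⟩
  have h0 : 0 ∈ posShift S' w.length := by simpa using hS'
  rw [subword_append, subword_singleton_of_mem a h0]
  exact h _ (subword_sublist w S')

lemma HasCore.mul {L₁ L₂ : Language α} {u w : List α} {n₁ n₂ : ℕ} (h₁ : HasCore L₁ u n₁)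
    (h₂ : HasCore L₂ w n₂) : HasCore (L₁ * L₂) (u ++ w) (n₁ + n₂) := by
  obtain ⟨S₁, hS₁, hcore₁⟩ := h₁
  obtain ⟨S₂, hS₂, hcore₂⟩ := h₂
  refine ⟨S₁ ∪ S₂.map (addRightEmbedding u.length), ?_, fun S' hS' => ?_⟩
  · exact (Finset.card_union_le _ _).trans (by rw [Finset.card_map]; omega)
  · rw [Finset.union_subset_iff, Finset.map_subset_iff_subset_preimage] at hS'
    rw [subword_append]
    exact Language.mem_mul.2 ⟨_, hcore₁ S' hS'.1, _, hcore₂ _ hS'.2, rfl⟩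

lemma HasCore.inf {L₁ L₂ : Language α} {τ : List α} {n₁ n₂ : ℕ} (h₁ : HasCore L₁ τ n₁)
    (h₂ : HasCore L₂ τ n₂) : HasCore (L₁ ⊓ L₂) τ (n₁ + n₂) := by
  obtain ⟨S₁, hS₁, hcore₁⟩ := h₁
  obtain ⟨S₂, hS₂, hcore₂⟩ := h₂
  refine ⟨S₁ ∪ S₂, (Finset.card_union_le _ _).trans (by omega), fun S' hS' => ?_⟩
  rw [Finset.union_subset_iff] at hS'
  exact ⟨hcore₁ S' hS'.1, hcore₂ S' hS'.2⟩

end Core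

section InsertClosed

open scoped List

variable {α : Type*}

def InsertClosed (L : Language α) : Prop :=
  ∀ (x : List α) (a : α) (y : List α), y ≠ [] → x ++ y ∈ L → x ++ a :: y ∈ L

lemma insertClosed_top : InsertClosed (⊤ : Language α) :=
  fun _ _ _ _ _ => trivial

lemma InsertClosed.sup {L₁ L₂ : Language α} (h₁ : InsertClosed L₁) (h₂ : InsertClosed L₂) :
    InsertClosed (L₁ ⊔ L₂) := by
  rintro x a y hy (h | h)
  · exact Or.inl (h₁ x a y hy h)
  · exact Or.inr (h₂ x a y hy h)

lemma InsertClosed.inf {L₁ L₂ : Language α} (h₁ : InsertClosed L₁) (h₂ : InsertClosed L₂) :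
    InsertClosed (L₁ ⊓ L₂) :=
  fun x a y hy h => ⟨h₁ x a y hy h.1, h₂ x a y hy h.2⟩

lemma InsertClosed.mul {L₁ L₂ : Language α} (h₁ : InsertClosed L₁) (h₂ : InsertClosed L₂) :
    InsertClosed (L₁ * L₂) := by
  intro x a y hy h
  obtain ⟨u, hu, w, hw, huw⟩ := Language.mem_mul.1 h
  rcases List.append_eq_append_iff.1 huw with ⟨k, rfl, rfl⟩ | ⟨k, rfl, rfl⟩
  · exact Language.mem_mul.2 ⟨u, hu, k ++ a :: y, h₂ k a y hy hw, by simp⟩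
  · rcases eq_or_ne k [] with rfl | hk
    · rw [List.nil_append] at hy
      exact Language.mem_mul.2 ⟨x, by simpa using hu, a :: w, h₂ [] a w hy hw, rfl⟩
    · exact Language.mem_mul.2 ⟨x ++ a :: k, h₁ x a k hk hu, w, hw, by simp⟩

lemma InsertClosed.append_sublist_append {L : Language α} (hL : InsertClosed L) {σ τ : List α}
    (h : σ <+ τ) {p s : List α} (hs : s ≠ []) (hmem : p ++ σ ++ s ∈ L) : p ++ τ ++ s ∈ L := by
  induction h generalizing p with
  | slnil => exact hmem
  | cons a _ ih => simpa using hL p a _ (by simp [hs]) (by simpa using ih hmem)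
  | cons_cons a _ ih => simpa using ih (p := p ++ [a]) (by simpa using hmem)

lemma HasCore.sdiff {L₁ L₂ : Language α} {τ : List α} {n : ℕ} (h₁ : HasCore L₁ τ n)
    (h₂ : InsertClosed L₂) (hτ : τ ∉ L₂) : HasCore (L₁ \ L₂) τ (n + 1) := by
  rcases τ.eq_nil_or_concat' with rfl | ⟨w, v, rfl⟩
  · obtain ⟨S, hS, hcore⟩ := h₁
    exact ⟨S, by omega, fun S' hS' => ⟨hcore S' hS', hτ⟩⟩
  · have hlast : HasCore L₂ᶜ (w ++ [v]) 1 := hasCore_append_singleton fun w' hw' hmem => hτ <|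
      h₂.append_sublist_append hw' (p := []) (List.cons_ne_nil v []) hmem
    exact (h₁.inf hlast).mono sdiff_eq.ge le_rfl

end InsertClosed

section Semantics

variable {P : Type}

lemma PropForm.size_pos (γ : PropForm P) : 0 < γ.size := by
  cases γ <;> simp [PropForm.size]

lemma ADT.size_pos (t : ADT P) : 0 < t.size := by
  induction t <;> simp [ADT.size, PropForm.size_pos] <;> omega

lemma insertClosed_sem_of_cd_eq_zero (t : ADT P) (h : cd t = 0) : InsertClosed (sem t) := by
  induction t with
  | eps =>
    intro x a y hy hxy
    exact absurd (List.append_eq_nil_iff.1 hxy).2 hy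
  | leaf γ =>
    rintro x a y hy ⟨w, v, hxy, hv⟩
    obtain ⟨y, b, rfl⟩ := (y.eq_nil_or_concat').resolve_left hy
    have hxy' : (x ++ y) ++ [b] = w ++ [v] := by simpa using hxy
    have hb : [b] = [v] := (List.append_inj' hxy' rfl).2
    exact ⟨x ++ a :: y, b, by simp, List.singleton_inj.1 hb ▸ hv⟩
  | orA t₁ t₂ ih₁ ih₂ =>
    simp only [cd, Nat.max_eq_zero_iff] at h
    exact (ih₁ h.1).sup (ih₂ h.2)
  | sand t₁ t₂ ih₁ ih₂ =>
    simp only [cd, Nat.max_eq_zero_iff] at h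
    exact (ih₁ h.1).mul (ih₂ h.2)
  | andA t₁ t₂ ih₁ ih₂ =>
    simp only [cd, Nat.max_eq_zero_iff] at h
    exact (((ih₁ h.1).mul insertClosed_top).inf (ih₂ h.2)).sup
      (((ih₂ h.2).mul insertClosed_top).inf (ih₁ h.1))
  | cm t₁ t₂ => simp [cd] at h

lemma hasCore_sem (t : ADT P) (ht : cd t ≤ 1) {τ : Trace P} (hτ : τ ∈ sem t) :
    HasCore (sem t) τ t.size := by
  induction t generalizing τ with
  | eps =>
    obtain rfl : τ = [] := hτ
    exact (hasCore_nil (L := sem .eps) rfl).mono le_rfl (ADT.size_pos _).le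
  | leaf γ =>
    obtain ⟨w, v, rfl, hv⟩ := hτ
    exact (hasCore_append_singleton (L := sem (.leaf γ)) fun w' _ => ⟨w', v, rfl, hv⟩).mono
      le_rfl γ.size_pos
  | orA t₁ t₂ ih₁ ih₂ =>
    simp only [cd, max_le_iff] at ht
    rcases hτ with h | h
    · exact (ih₁ ht.1 h).mono le_sup_left (Nat.le_add_right _ _)
    · exact (ih₂ ht.2 h).mono le_sup_right (Nat.le_add_left _ _)
  | sand t₁ t₂ ih₁ ih₂ =>
    simp only [cd, max_le_iff] at ht
    obtain ⟨u, hu, w, hw, rfl⟩ := Language.mem_mul.1 hτ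
    exact (ih₁ ht.1 hu).mul (ih₂ ht.2 hw)
  | andA t₁ t₂ ih₁ ih₂ =>
    simp only [cd, max_le_iff] at ht
    rcases hτ with ⟨hpre, h₂⟩ | ⟨hpre, h₁⟩
    · obtain ⟨u, hu, w, -, rfl⟩ := Language.mem_mul.1 hpre
      exact (((ih₁ ht.1 hu).mul (hasCore_top w)).inf (ih₂ ht.2 h₂)).mono le_sup_left
        (by simp [ADT.size])
    · obtain ⟨u, hu, w, -, rfl⟩ := Language.mem_mul.1 hpre
      exact (((ih₂ ht.2 hu).mul (hasCore_top w)).inf (ih₁ ht.1 h₁)).mono le_sup_right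
        (by simp [ADT.size, add_comm])
  | cm t₁ t₂ ih₁ _ =>
    simp only [cd, max_le_iff] at ht
    have hsize := t₂.size_pos
    exact ((ih₁ ht.1 hτ.1).sdiff (insertClosed_sem_of_cd_eq_zero t₂ (by omega)) hτ.2).mono
      le_rfl (by simp only [ADT.size]; omega)

end Semantics

theorem small_model_property_ADT1_general {P : Type} (t : ADT P) (ht : cd t ≤ 1) :
    Set.Nonempty (sem t : Set (Trace P)) ↔
      ∃ τ : Trace P, τ ∈ sem t ∧ τ.length ≤ ADT.size t := by
  constructor
  · rintro ⟨τ, hτ⟩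
    exact (hasCore_sem t ht hτ).exists_mem_length_le
  · rintro ⟨τ, hτ, -⟩
    exact ⟨τ, hτ⟩

/-- **Small model property for ADT₁** : an adt `t` with countermeasure-depth at most 1
has nonempty semantics iff it contains a trace of length at most the size of `t`. -/
theorem small_model_property_ADT1 {P : Type} [Fintype P] (t : ADT P) (ht : cd t ≤ 1) :
    Set.Nonempty (sem t : Set (Trace P)) ↔
      ∃ τ : Trace P, τ ∈ sem t ∧ τ.length ≤ ADT.size t :=
  small_model_property_ADT1_general t ht

end ADTpaper
end

section
/- A language L ⊆ Σ* is star-free if and only if L is ADT-definable, i.e., L = ⟦t⟧ for some adt t over Prop. -/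
namespace ADTpaper

/-- The class of star-free languages over an alphabet `α`: the smallest class containing
all finite languages and closed under union, intersection, complement and concatenation. -/
inductive IsStarFree {α : Type} : Language α → Prop where
  | finite {L : Language α} : Set.Finite (L : Set (List α)) → IsStarFree L
  | union {L₁ L₂ : Language α} : IsStarFree L₁ → IsStarFree L₂ → IsStarFree (L₁ ⊔ L₂)
  | inter {L₁ L₂ : Language α} : IsStarFree L₁ → IsStarFree L₂ → IsStarFree (L₁ ⊓ L₂)
  | compl {L : Language α} : IsStarFree L → IsStarFree Lᶜ
  | concat {L₁ L₂ : Language α} : IsStarFree L₁ → IsStarFree L₂ → IsStarFree (L₁ * L₂)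

/-!
Every adt operator acts on languages through operations under which star-free languages are
closed: `AND(t₁, t₂)` is built from concatenation with `Σ*`, intersection and union, and a leaf
`γ` denotes `Σ*` followed by the letters satisfying `γ`, a finite language because `Prop` is
finite. Conversely, `C` is set difference and `OR(ε, true)` denotes `Σ*`, so all Boolean
operations are ADT-definable, and `SAND` is concatenation. A finite language is a finite union of
words and a word a `SAND` of letters; the letter `v` is `C(γᵥ, SAND(true, true))`, where the
formula `γᵥ` is satisfied by `v` alone.
-/

namespace PropForm

variable {P : Type}

theorem exists_eval_iff_agree_on {S : Set P} (hS : S.Finite) (v : Val P) :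
    ∃ φ : PropForm P, ∀ u : Val P, φ.eval u ↔ ∀ p ∈ S, (p ∈ u ↔ p ∈ v) := by
  induction S, hS using Set.Finite.induction_on with
  | empty => exact ⟨.tru, fun u => by simp [eval]⟩
  | @insert a _ _ _ ih =>
    classical
    obtain ⟨φ, hφ⟩ := ih
    refine ⟨.conj (if a ∈ v then .var a else .neg (.var a)) φ, fun u => ?_⟩
    by_cases ha : a ∈ v <;> simp [eval, hφ, ha]

theorem exists_eval_iff_eq [Finite P] (v : Val P) :
    ∃ φ : PropForm P, ∀ u : Val P, φ.eval u ↔ u = v := by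
  obtain ⟨φ, hφ⟩ := exists_eval_iff_agree_on Set.finite_univ v
  exact ⟨φ, fun u => (hφ u).trans (by simp [Set.ext_iff])⟩

end PropForm

section Language

variable {α : Type}

theorem singleton_mul_singleton (a b : List α) : ({a} * {b} : Language α) = {a ++ b} :=
  Set.image2_singleton

def letters (s : Set α) : Language α := (fun a => [a]) '' s

theorem mem_letters {s : Set α} {w : List α} : w ∈ letters s ↔ ∃ a ∈ s, [a] = w :=
  Iff.rfl

end Language

section Semantics

variable {P : Type}

theorem mem_sem_leaf {γ : PropForm P} {w : Trace P} :
    w ∈ sem (.leaf γ) ↔ ∃ w' v, w = w' ++ [v] ∧ γ.eval v :=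
  Iff.rfl

theorem sem_leaf (γ : PropForm P) : sem (.leaf γ) = ⊤ * letters {v | γ.eval v} := by
  ext w
  rw [mem_sem_leaf, Language.mem_mul]
  constructor
  · rintro ⟨w', v, rfl, hv⟩
    exact ⟨w', trivial, [v], ⟨v, hv, rfl⟩, rfl⟩
  · rintro ⟨w', -, _, ⟨v, hv, rfl⟩, rfl⟩
    exact ⟨w', v, rfl, hv⟩

theorem mem_sem_leaf_tru {w : Trace P} : w ∈ sem (.leaf .tru) ↔ w ≠ [] := by
  refine ⟨?_, fun hw => ?_⟩
  · rintro ⟨w', v, rfl, -⟩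
    simp
  · obtain ⟨w', v, rfl⟩ := (List.eq_nil_or_concat' w).resolve_left hw
    exact ⟨w', v, rfl, trivial⟩

theorem sem_orA_eps_leaf_tru : sem (.orA .eps (.leaf .tru)) = (⊤ : Language (Val P)) := by
  refine eq_top_iff.2 fun w _ => ?_
  rcases eq_or_ne w [] with rfl | hw
  · exact Or.inl rfl
  · exact Or.inr (mem_sem_leaf_tru.2 hw)

theorem mem_sem_sand_leaf_tru {w : Trace P} :
    w ∈ sem (.sand (.leaf .tru) (.leaf .tru)) ↔ 2 ≤ w.length := by
  change w ∈ sem (.leaf .tru) * sem (.leaf .tru) ↔ _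
  simp only [Language.mem_mul, mem_sem_leaf_tru]
  constructor
  · rintro ⟨a, ha, b, hb, rfl⟩
    have := List.length_pos_iff.2 ha
    have := List.length_pos_iff.2 hb
    rw [List.length_append]
    omega
  · intro hw
    obtain ⟨x, y, w, rfl⟩ : ∃ x y w', w = x :: y :: w' := by
      match w, hw with
      | x :: y :: w', _ => exact ⟨x, y, w', rfl⟩
    exact ⟨[x], List.cons_ne_nil _ _, y :: w, List.cons_ne_nil _ _, rfl⟩

theorem sem_cm_leaf_sand_leaf_tru (γ : PropForm P) :
    sem (.cm (.leaf γ) (.sand (.leaf .tru) (.leaf .tru))) = letters {v | γ.eval v} := by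
  ext w
  change w ∈ sem (.leaf γ) ∧ w ∉ sem (.sand (.leaf .tru) (.leaf .tru)) ↔ _
  rw [mem_sem_leaf, mem_sem_sand_leaf_tru, mem_letters]
  constructor
  · rintro ⟨⟨w', v, rfl, hv⟩, hlen⟩
    rw [List.length_append, List.length_singleton] at hlen
    obtain rfl : w' = [] := List.eq_nil_of_length_eq_zero (by omega)
    exact ⟨v, hv, rfl⟩
  · rintro ⟨v, hv, rfl⟩
    exact ⟨⟨[], v, rfl, hv⟩, by simp⟩

end Semantics

def ADTDefinable {P : Type} (L : Language (Val P)) : Prop :=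
  ∃ t : ADT P, sem t = L

namespace ADTDefinable

variable {P : Type} {L L₁ L₂ : Language (Val P)}

theorem sup (h₁ : ADTDefinable L₁) (h₂ : ADTDefinable L₂) : ADTDefinable (L₁ ⊔ L₂) := by
  obtain ⟨⟨t₁, rfl⟩, ⟨t₂, rfl⟩⟩ := And.intro h₁ h₂
  exact ⟨.orA t₁ t₂, rfl⟩

theorem mul (h₁ : ADTDefinable L₁) (h₂ : ADTDefinable L₂) : ADTDefinable (L₁ * L₂) := by
  obtain ⟨⟨t₁, rfl⟩, ⟨t₂, rfl⟩⟩ := And.intro h₁ h₂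
  exact ⟨.sand t₁ t₂, rfl⟩

theorem sdiff (h₁ : ADTDefinable L₁) (h₂ : ADTDefinable L₂) : ADTDefinable (L₁ \ L₂) := by
  obtain ⟨⟨t₁, rfl⟩, ⟨t₂, rfl⟩⟩ := And.intro h₁ h₂
  exact ⟨.cm t₁ t₂, rfl⟩

theorem inf (h₁ : ADTDefinable L₁) (h₂ : ADTDefinable L₂) : ADTDefinable (L₁ ⊓ L₂) :=
  sdiff_sdiff_right_self (x := L₁) (y := L₂) ▸ h₁.sdiff (h₁.sdiff h₂)

theorem one : ADTDefinable (1 : Language (Val P)) :=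
  ⟨.eps, rfl⟩

theorem bot : ADTDefinable (⊥ : Language (Val P)) :=
  sdiff_self (a := (1 : Language (Val P))) ▸ one.sdiff one

theorem top : ADTDefinable (⊤ : Language (Val P)) :=
  ⟨_, sem_orA_eps_leaf_tru⟩

theorem compl (h : ADTDefinable L) : ADTDefinable Lᶜ :=
  top_sdiff (x := L) ▸ top.sdiff h

theorem letter [Finite P] (v : Val P) : ADTDefinable ({[v]} : Language (Val P)) := by
  obtain ⟨φ, hφ⟩ := PropForm.exists_eval_iff_eq v
  refine ⟨_, (sem_cm_leaf_sand_leaf_tru φ).trans ?_⟩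
  ext w
  simp only [mem_letters, Set.mem_ofPred_eq, hφ, exists_eq_left]
  exact eq_comm

theorem singleton [Finite P] (w : Trace P) : ADTDefinable ({w} : Language (Val P)) := by
  induction w with
  | nil => exact one
  | cons v w ih => exact singleton_mul_singleton [v] w ▸ (letter v).mul ih

theorem of_finite [Finite P] (hL : (L : Set (Trace P)).Finite) : ADTDefinable L := by
  induction L, hL using Set.Finite.induction_on with
  | empty => exact bot
  | insert _ _ ih => exact Set.insert_eq _ _ ▸ (singleton _).sup ih

end ADTDefinable

namespace IsStarFree

variable {α : Type} {L₁ L₂ : Language α}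

theorem top : IsStarFree (⊤ : Language α) :=
  compl_bot (α := Language α) ▸ compl (finite Set.finite_empty)

theorem sdiff (h₁ : IsStarFree L₁) (h₂ : IsStarFree L₂) : IsStarFree (L₁ \ L₂) :=
  sdiff_eq (x := L₁) (y := L₂) ▸ inter h₁ (compl h₂)

end IsStarFree

theorem isStarFree_sem {P : Type} [Finite P] (t : ADT P) : IsStarFree (sem t) := by
  induction t with
  | eps => exact .finite (Set.finite_singleton [])
  | leaf γ => exact sem_leaf γ ▸ .concat .top (.finite ((Set.toFinite _).image _))
  | orA _ _ ih₁ ih₂ => exact .union ih₁ ih₂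
  | sand _ _ ih₁ ih₂ => exact .concat ih₁ ih₂
  | andA _ _ ih₁ ih₂ =>
    exact .union (.inter (.concat ih₁ .top) ih₂) (.inter (.concat ih₂ .top) ih₁)
  | cm _ _ ih₁ ih₂ => exact ih₁.sdiff ih₂

/-- A language over `Σ = 2^P` is star-free iff it is ADT-definable. -/
theorem starfree_iff_ADT_definable {P : Type} [Fintype P] (L : Language (Val P)) :
    IsStarFree L ↔ ∃ t : ADT P, sem t = L := by
  refine ⟨fun h => ?_, fun ⟨t, ht⟩ => ht ▸ isStarFree_sem t⟩
  change ADTDefinable L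
  induction h with
  | finite hL => exact ADTDefinable.of_finite hL
  | union _ _ ih₁ ih₂ => exact ih₁.sup ih₂
  | inter _ _ ih₁ ih₂ => exact ih₁.inf ih₂
  | compl _ ih => exact ih.compl
  | concat _ _ ih₁ ih₂ => exact ih₁.mul ih₂

end ADTpaper
end

section
/- For every adt t with cd(t) = 0: if τ ∈ ⟦t⟧ and τ′ is a lift of τ (τ ⊴ τ′), then τ′ ∈ ⟦t⟧; i.e., the semantics of countermeasure-free adts is upward closed under the lift relation. -/
namespace ADTpaper

/-- `IsLift τ' τ` (written `τ' ⊴ τ`): `τ` is a lift of `τ' = v₁…vₙ`,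
i.e. `τ ∈ Σ*v₁Σ*v₂…Σ*vₙ`. -/
def IsLift {α : Type} : List α → List α → Prop
  | [], τ => τ = []
  | v :: τ', τ => ∃ u rest, τ = u ++ v :: rest ∧ IsLift τ' rest

lemma isLift_append_split {α : Type} : ∀ (a b τ' : List α), IsLift (a ++ b) τ' →
    ∃ a' b', τ' = a' ++ b' ∧ IsLift a a' ∧ IsLift b b' := by
  intro a
  induction a with
  | nil => intro b τ' h; exact ⟨[], τ', rfl, rfl, h⟩
  | cons v as ih =>
    intro b τ' h
    obtain ⟨u, rest, rfl, hrest⟩ := h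
    obtain ⟨a'', b', rfl, h1, h2⟩ := ih b rest hrest
    exact ⟨u ++ v :: a'', b', by simp, ⟨u, a'', by simp, h1⟩, h2⟩

/-- The semantics of a countermeasure-free adt is upward closed under the lift relation. -/
theorem adt0_sem_lift_closed {P : Type} (t : ADT P) (ht : cd t = 0)
    (τ : Trace P) (hτ : τ ∈ sem t) (τ' : Trace P) (hlift : IsLift τ τ') :
    τ' ∈ sem t := by
  induction t generalizing τ τ' with
  | eps =>
    simp only [sem, Language.mem_one] at hτ ⊢
    subst hτ; exact hlift
  | leaf γ =>
    obtain ⟨w, v, rfl, hv⟩ := hτ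
    obtain ⟨a', b', rfl, _, hb⟩ := isLift_append_split w [v] τ' hlift
    obtain ⟨u, rest, rfl, hrest⟩ := hb
    have : rest = [] := hrest
    subst this
    exact ⟨a' ++ u, v, by simp, hv⟩
  | orA t₁ t₂ ih₁ ih₂ =>
    simp only [cd, Nat.max_eq_zero_iff] at ht
    rcases hτ with h | h
    · exact Or.inl (ih₁ ht.1 τ h τ' hlift)
    · exact Or.inr (ih₂ ht.2 τ h τ' hlift)
  | sand t₁ t₂ ih₁ ih₂ =>
    simp only [cd, Nat.max_eq_zero_iff] at ht
    obtain ⟨a, ha, b, hb, rfl⟩ := hτ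
    obtain ⟨a', b', rfl, h1, h2⟩ := isLift_append_split a b τ' hlift
    exact ⟨a', ih₁ ht.1 a ha a' h1, b', ih₂ ht.2 b hb b' h2, rfl⟩
  | andA t₁ t₂ ih₁ ih₂ =>
    simp only [cd, Nat.max_eq_zero_iff] at ht
    have key : ∀ (s : ADT P), cd s = 0 →
        (∀ τ τ', τ ∈ sem s → IsLift τ τ' → τ' ∈ sem s) →
        ∀ τ τ', τ ∈ sem s * (⊤ : Language (Val P)) → IsLift τ τ' →
          τ' ∈ sem s * (⊤ : Language (Val P)) := by
      intro s _ ihs τ τ'' hτ hl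
      obtain ⟨a, ha, b, _, rfl⟩ := hτ
      obtain ⟨a', b', rfl, h1, _⟩ := isLift_append_split a b τ'' hl
      exact ⟨a', ihs a a' ha h1, b', trivial, rfl⟩
    rcases hτ with ⟨h1, h2⟩ | ⟨h1, h2⟩
    · exact Or.inl ⟨key t₁ ht.1 (fun τ τ' h hl => ih₁ ht.1 τ h τ' hl) τ τ' h1 hlift,
        ih₂ ht.2 τ h2 τ' hlift⟩
    · exact Or.inr ⟨key t₂ ht.2 (fun τ τ' h hl => ih₂ ht.2 τ h τ' hl) τ τ' h1 hlift,
        ih₁ ht.1 τ h2 τ' hlift⟩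
  | cm t₁ t₂ =>
    simp only [cd] at ht
    omega

end ADTpaper
end

section
/- If t is an adt with cd(t) = 0 and ⟦t⟧ contains at least one nonempty trace, then ⟦t⟧ is infinite. -/
namespace ADTpaper

lemma prepend_mem {P : Type} : ∀ t : ADT P, cd t = 0 →
    ∀ w, w ∈ sem t → w ≠ [] → ∀ u : Trace P, u ++ w ∈ sem t := by
  intro t
  induction t with
  | eps =>
    intro _ w hw hne
    exact absurd ((Language.mem_one _).mp hw) hne
  | leaf γ =>
    intro _ w hw _ u
    obtain ⟨w', v, rfl, hv⟩ := hw
    exact ⟨u ++ w', v, by simp, hv⟩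
  | orA t₁ t₂ ih₁ ih₂ =>
    intro ht w hw hne u
    rw [cd, Nat.max_eq_zero_iff] at ht
    rcases hw with hw | hw
    · exact Or.inl (ih₁ ht.1 w hw hne u)
    · exact Or.inr (ih₂ ht.2 w hw hne u)
  | sand t₁ t₂ ih₁ ih₂ =>
    intro ht w hw hne u
    rw [cd, Nat.max_eq_zero_iff] at ht
    obtain ⟨a, ha, b, hb, rfl⟩ := hw
    rcases eq_or_ne a [] with rfl | hane
    · refine ⟨[], ha, u ++ b, ih₂ ht.2 b hb (by simpa using hne) u, by simp⟩
    · exact ⟨u ++ a, ih₁ ht.1 a ha hane u, b, hb, by simp⟩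
  | andA t₁ t₂ ih₁ ih₂ =>
    intro ht w hw hne u
    rw [cd, Nat.max_eq_zero_iff] at ht
    rcases hw with ⟨⟨a, ha, b, hb, rfl⟩, h₂⟩ | ⟨⟨a, ha, b, hb, rfl⟩, h₂⟩
    · refine Or.inl ⟨?_, ih₂ ht.2 _ h₂ hne u⟩
      rcases eq_or_ne a [] with rfl | hane
      · exact ⟨[], ha, u ++ b, trivial, by simp⟩
      · exact ⟨u ++ a, ih₁ ht.1 a ha hane u, b, hb, by simp⟩
    · refine Or.inr ⟨?_, ih₁ ht.1 _ h₂ hne u⟩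
      rcases eq_or_ne a [] with rfl | hane
      · exact ⟨[], ha, u ++ b, trivial, by simp⟩
      · exact ⟨u ++ a, ih₂ ht.2 a ha hane u, b, hb, by simp⟩
  | cm t₁ t₂ ih₁ ih₂ =>
    intro ht
    rw [cd, Nat.max_eq_zero_iff] at ht
    exact absurd ht.2 (by simp)

/-- If an adt `t` with `cd(t) = 0` has a nonempty trace in its semantics,
then its semantics is infinite. -/
theorem adt0_sem_infinite {P : Type} (t : ADT P) (ht : cd t = 0)
    (h : ∃ τ : Trace P, τ ∈ sem t ∧ τ ≠ []) :
    Set.Infinite (sem t : Set (Trace P)) := by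
  obtain ⟨τ, hτ, hne⟩ := h
  apply Set.infinite_of_injective_forall_mem
    (f := fun n : ℕ => List.replicate n (∅ : Set P) ++ τ)
  · intro m n hmn
    have := congrArg List.length hmn
    simpa using this
  · intro n
    exact prepend_mem t ht τ hτ hne _

end ADTpaper
end

section
/- For every adt t (with its operators taken binary) and every trace τ ∈ gen(t), the length of τ is at most the number of leaves of t. -/
namespace ADTpaper

open Classical in
/-- Shuffle of two traces with possible merging of equal letters. -/
noncomputable def shuf {α : Type} : List α → List α → Set (List α)
  | [], τ => {τ}
  | v :: τ', [] => {v :: τ'}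
  | v₁ :: τ₁, v₂ :: τ₂ =>
      if v₁ = v₂ then
        (v₁ :: ·) '' (shuf τ₁ (v₂ :: τ₂) ∪ shuf (v₁ :: τ₁) τ₂ ∪ shuf τ₁ τ₂)
      else
        (v₁ :: ·) '' shuf τ₁ (v₂ :: τ₂) ∪ (v₂ :: ·) '' shuf (v₁ :: τ₁) τ₂
  termination_by τ₁ τ₂ => τ₁.length + τ₂.length
  decreasing_by
    all_goals simp only [List.length_cons]
    all_goals omega

/-- The set `gen(t)` of candidate generators of the semantics of an adt `t`. -/
noncomputable def gen {P : Type} : ADT P → Language (Val P)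
  | .eps => ⊥
  | .leaf γ => {w | ∃ v : Val P, PropForm.eval v γ ∧ w = [v]}
  | .orA t₁ t₂ => gen t₁ ⊔ gen t₂
  | .sand t₁ t₂ => gen t₁ * gen t₂
  | .andA t₁ t₂ =>
      {w | ∃ u ∈ gen t₁, ∃ x ∈ gen t₂, w ∈ shuf u x} ⊓ sem (ADT.andA t₁ t₂)
  | .cm t₁ t₂ => gen t₁ \ sem t₂

/-- Number of leaves of an adt. -/
def leaves {P : Type} : ADT P → ℕ
  | .eps => 1
  | .leaf _ => 1
  | .orA t₁ t₂ => leaves t₁ + leaves t₂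
  | .sand t₁ t₂ => leaves t₁ + leaves t₂
  | .andA t₁ t₂ => leaves t₁ + leaves t₂
  | .cm t₁ t₂ => leaves t₁ + leaves t₂

theorem shuf_length_le {α : Type} (u x τ : List α) (h : τ ∈ shuf u x) :
    τ.length ≤ u.length + x.length := by
  match u, x with
  | [], x =>
    simp [shuf] at h; simp [h]
  | v :: u', [] =>
    simp [shuf] at h; simp [h]
  | v₁ :: u', v₂ :: x' =>
    rw [shuf] at h
    split at h
    · obtain ⟨τ', hτ', rfl⟩ := h
      rcases hτ' with (h' | h') | h'
      · have := shuf_length_le _ _ _ h'; simp at *; omega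
      · have := shuf_length_le _ _ _ h'; simp at *; omega
      · have := shuf_length_le _ _ _ h'; simp at *; omega
    · rcases h with ⟨τ', h', rfl⟩ | ⟨τ', h', rfl⟩
      · have := shuf_length_le _ _ _ h'; simp at *; omega
      · have := shuf_length_le _ _ _ h'; simp at *; omega
  termination_by u.length + x.length
  decreasing_by all_goals (simp; try omega)

/-- Every trace in `gen(t)` has length at most the number of leaves of `t`. -/
theorem gen_length_le_leaves {P : Type} (t : ADT P) (τ : Trace P) (hτ : τ ∈ gen t) :
    τ.length ≤ leaves t := by
  induction t generalizing τ with
  | eps => exact absurd hτ (Set.notMem_empty τ)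
  | leaf γ => obtain ⟨v, _, rfl⟩ := hτ; simp [leaves]
  | orA t₁ t₂ ih₁ ih₂ =>
    rcases hτ with h | h
    · exact le_trans (ih₁ _ h) (by simp [leaves])
    · exact le_trans (ih₂ _ h) (by simp [leaves])
  | sand t₁ t₂ ih₁ ih₂ =>
    obtain ⟨u, hu, x, hx, rfl⟩ := hτ
    simp only [leaves, List.length_append]
    exact Nat.add_le_add (ih₁ _ hu) (ih₂ _ hx)
  | andA t₁ t₂ ih₁ ih₂ =>
    obtain ⟨⟨u, hu, x, hx, hs⟩, _⟩ := hτ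
    calc τ.length ≤ u.length + x.length := shuf_length_le _ _ _ hs
    _ ≤ leaves t₁ + leaves t₂ := Nat.add_le_add (ih₁ _ hu) (ih₂ _ hx)
  | cm t₁ t₂ ih₁ _ =>
    exact le_trans (ih₁ _ hτ.1) (by simp [leaves])

end ADTpaper
end

section
/- Over the two-letter alphabet Σ = {a,b}, the language (ab)⁺ = {ab, abab, ababab, …} has no set of generators. -/
namespace ADTpaper

/-- `glue [w₁,…,wₙ] [v₁,…,vₙ]` is the trace `w₁v₁w₂v₂…wₙvₙ`. -/
def glue {α : Type} (ws : List (List α)) (g : List α) : List α :=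
  (List.zipWith (fun w v => w ++ [v]) ws g).flatten

/-- `G` is a set of generators of `T`: a finite subset of `T` such that every nonempty
`τ ∈ T` can be written `w₁v₁w₂v₂…wₙvₙ` for some `v₁…vₙ ∈ G`, and every trace
`w₁′v₁…wₙ′vₙ` such that each `wᵢvᵢ` is a lift of `wᵢ′vᵢ` belongs to `T`. -/
def IsGenSet {α : Type} (G T : Set (List α)) : Prop :=
  Set.Finite G ∧ G ⊆ T ∧
    ∀ τ ∈ T, τ ≠ [] →
      ∃ g ∈ G, ∃ ws : List (List α), ws.length = g.length ∧ τ = glue ws g ∧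
        ∀ ws' : List (List α), ws'.length = g.length →
          List.Forall₂ IsLift (List.zipWith (fun w v => w ++ [v]) ws' g)
            (List.zipWith (fun w v => w ++ [v]) ws g) →
          glue ws' g ∈ T

/-- The language `(ab)⁺` over the two-letter alphabet `Σ = {a, b}`
(here `α = Bool`, `a := true`, `b := false`). -/
def abPlusB : Set (List Bool) :=
  {w | ∃ n : ℕ, 0 < n ∧ w = (List.replicate n [true, false]).flatten}

lemma isLift_refl {α : Type} : ∀ l : List α, IsLift l l
  | [] => rfl
  | x :: l => ⟨[], l, rfl, isLift_refl l⟩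

lemma isLift_cons {α : Type} (c : α) {m : List α} (hm : m ≠ []) : IsLift m (c :: m) := by
  cases m with
  | nil => exact absurd rfl hm
  | cons x l => exact ⟨[c], l, rfl, isLift_refl l⟩

lemma glue_cons {α : Type} (w : List α) (v : α) (ws : List (List α)) (g : List α) :
    glue (w :: ws) (v :: g) = w ++ v :: glue ws g := by
  simp [glue]

lemma glue_length {α : Type} : ∀ (ws : List (List α)) (g : List α),
    ws.length = g.length →
    (glue ws g).length = (ws.map List.length).sum + g.length
  | [], [], _ => rfl
  | [], _ :: _, h => by simp at h
  | _ :: _, [], h => by simp at h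
  | w :: ws, v :: g, h => by
      have ih := glue_length ws g (by simpa using h)
      simp [glue_cons, ih]
      omega

/-- One letter of some `wᵢ` can be deleted, staying below the original decomposition. -/
lemma shrink {α : Type} : ∀ (ws : List (List α)) (g : List α),
    ws.length = g.length → 0 < (ws.map List.length).sum →
    ∃ ws' : List (List α), ws'.length = g.length ∧
      List.Forall₂ IsLift (List.zipWith (fun w v => w ++ [v]) ws' g)
        (List.zipWith (fun w v => w ++ [v]) ws g) ∧
      (glue ws' g).length + 1 = (glue ws g).length
  | [], [], _, hs => by simp at hs
  | [], _ :: _, h, _ => by simp at h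
  | _ :: _, [], h, _ => by simp at h
  | w :: ws, v :: g, h, hs => by
      rcases w with _ | ⟨c, t⟩
      · have hs' : 0 < (ws.map List.length).sum := by simpa using hs
        obtain ⟨ws', hlen, hfa, hl⟩ := shrink ws g (by simpa using h) hs'
        refine ⟨[] :: ws', by simpa using hlen, ?_, ?_⟩
        · exact List.Forall₂.cons (isLift_refl _) hfa
        · simp [glue_cons]; omega
      · refine ⟨t :: ws, by simpa using h, ?_, ?_⟩
        · refine List.Forall₂.cons ?_ ?_
          · exact isLift_cons c (by simp)
          · exact List.forall₂_same.mpr (fun x _ => isLift_refl x)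
        · simp [glue_cons]

lemma abPlus_len {w : List Bool} (h : w ∈ abPlusB) : ∃ n, 0 < n ∧ w.length = 2 * n := by
  obtain ⟨n, hn, rfl⟩ := h
  exact ⟨n, hn, by simp [List.length_flatten, List.map_replicate, mul_comm]⟩

/-- The language `(ab)⁺` has no set of generators. -/
theorem abPlus_no_set_of_generators : ¬ ∃ G : Set (List Bool), IsGenSet G abPlusB := by
  rintro ⟨G, hfin, hsub, hgen⟩
  -- bound on lengths in G
  obtain ⟨L, hL⟩ := (hfin.image List.length).bddAbove
  simp only [mem_upperBounds, Set.mem_image] at hL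
  set n := L + 1 with hn
  set τ : List Bool := (List.replicate n [true, false]).flatten with hτ
  have hτT : τ ∈ abPlusB := ⟨n, by omega, rfl⟩
  have hτlen : τ.length = 2 * n := by
    simp [hτ, List.length_flatten, List.map_replicate, mul_comm]
  have hτne : τ ≠ [] := by
    intro h; rw [h] at hτlen; simp at hτlen
  obtain ⟨g, hgG, ws, hlen, hglue, hclosed⟩ := hgen τ hτT hτne
  have hgL : g.length ≤ L := hL _ ⟨g, hgG, rfl⟩
  have hglen : (glue ws g).length = (ws.map List.length).sum + g.length :=
    glue_length ws g hlen
  rw [← hglue, hτlen] at hglen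
  have hpos : 0 < (ws.map List.length).sum := by omega
  obtain ⟨ws', hlen', hfa, hshort⟩ := shrink ws g hlen hpos
  have hmem : glue ws' g ∈ abPlusB := hclosed ws' hlen' hfa
  obtain ⟨m, hm, hmlen⟩ := abPlus_len hmem
  rw [← hglue, hτlen] at hshort
  omega

end ADTpaper
end

section
/- For every k ∈ ℕ, (W_k⁺·a·Σ*) ∩ (Σ*·b·W_k⁻) = W_k⁺·a·Σ*·b·W_k⁻; that is, whenever a word has a prefix of the form ua with u ∈ W_k⁺ and a suffix of the form bv with v ∈ W_k⁻, the distinguished occurrence of a can be chosen strictly before the distinguished occurrence of b. -/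
namespace ADTpaper

/-- The two-letter alphabet is `Bool`, with `a := true` and `b := false`;
`la` is the one-word language `{a}`. -/
def la : Language Bool := {[true]}

/-- The one-word language `{b}`. -/
def lb : Language Bool := {[false]}

/-- `μ(w)`: the number of occurrences of `a` minus the number of occurrences of `b`. -/
def mu (w : List Bool) : ℤ := (w.count true : ℤ) - (w.count false : ℤ)

/-- `W_k⁺`. -/
def Wp (k : ℕ) : Language Bool :=
  {w | mu w = (k : ℤ) ∧ ∀ w', w' <+: w → 0 ≤ mu w' ∧ mu w' ≤ (k : ℤ)}

/-- `W_k⁻`. -/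
def Wm (k : ℕ) : Language Bool :=
  {w | mu w = -(k : ℤ) ∧ ∀ w', w' <+: w → -(k : ℤ) ≤ mu w' ∧ mu w' ≤ 0}

section

variable {α : Type*} {L M : Language α} {a b : α} {w : List α}

theorem mem_mul_singleton_mul_top :
    w ∈ L * {[a]} * ⊤ ↔ ∃ u ∈ L, ∃ t, w = u ++ a :: t := by
  simp only [Language.mem_mul]
  constructor
  · rintro ⟨_, ⟨u, hu, _, rfl, rfl⟩, t, -, rfl⟩
    exact ⟨u, hu, t, by simp⟩
  · rintro ⟨u, hu, t, rfl⟩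
    exact ⟨u ++ [a], ⟨u, hu, [a], rfl, rfl⟩, t, trivial, by simp⟩

theorem mem_top_mul_singleton_mul :
    w ∈ ⊤ * {[b]} * M ↔ ∃ s, ∃ v ∈ M, w = s ++ b :: v := by
  simp only [Language.mem_mul]
  constructor
  · rintro ⟨_, ⟨s, -, _, rfl, rfl⟩, v, hv, rfl⟩
    exact ⟨s, v, hv, by simp⟩
  · rintro ⟨s, v, hv, rfl⟩
    exact ⟨s ++ [b], ⟨s, trivial, [b], rfl, rfl⟩, v, hv, by simp⟩

theorem mem_mul_singleton_mul_top_mul_singleton_mul :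
    w ∈ L * {[a]} * ⊤ * {[b]} * M ↔ ∃ u ∈ L, ∃ r, ∃ v ∈ M, w = u ++ a :: (r ++ b :: v) := by
  simp only [Language.mem_mul]
  constructor
  · rintro ⟨_, ⟨_, ⟨_, ⟨u, hu, _, rfl, rfl⟩, r, -, rfl⟩, _, rfl, rfl⟩, v, hv, rfl⟩
    exact ⟨u, hu, r, v, hv, by simp⟩
  · rintro ⟨u, hu, r, v, hv, rfl⟩
    exact ⟨u ++ [a] ++ r ++ [b], ⟨u ++ [a] ++ r, ⟨u ++ [a], ⟨u, hu, [a], rfl, rfl⟩, r, trivial, rfl⟩,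
      [b], rfl, rfl⟩, v, hv, by simp⟩

end

theorem mu_append (u v : List Bool) : mu (u ++ v) = mu u + mu v := by
  simp only [mu, List.count_append]
  push_cast
  ring

theorem mu_nonneg_of_append_mem_Wp {k : ℕ} {x y : List Bool} (h : x ++ y ∈ Wp k) : 0 ≤ mu y := by
  have hx : mu x ≤ k := (h.2 x (List.prefix_append x y)).2
  have hxy : mu (x ++ y) = k := h.1
  rw [mu_append] at hxy
  omega

theorem mu_neg_of_append_true_mem_Wm {k : ℕ} {y t : List Bool} (h : y ++ true :: t ∈ Wm k) :
    mu y < 0 := by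
  have hy : mu (y ++ [true]) ≤ 0 := (h.2 _ ⟨t, by simp⟩).2
  rw [mu_append, show mu [true] = 1 by simp [mu]] at hy
  omega

/-- If the `b` came no later than the `a`, the segment `r` between them would be a suffix of
`p ∈ W_k⁺`, so `μ r ≥ 0`, while `r ++ [a]` would be a prefix of `v ∈ W_k⁻`, so `μ r < 0`. -/
theorem exists_eq_append_true_of_append_eq {k : ℕ} {p v s t : List Bool} (hp : p ∈ Wp k)
    (hv : v ∈ Wm k) (h : p ++ true :: t = s ++ false :: v) : ∃ r, s = p ++ true :: r := by
  rcases List.append_eq_append_iff.mp h with ⟨x, hs, ht⟩ | ⟨y, hp', hv'⟩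
  · rcases List.cons_eq_append_iff.mp ht with ⟨rfl, h⟩ | ⟨r, rfl, -⟩
    · simp at h
    · exact ⟨r, hs⟩
  · rcases List.cons_eq_append_iff.mp hv' with ⟨rfl, h⟩ | ⟨r, rfl, rfl⟩
    · simp at h
    · subst hp'
      have hr_nonneg := mu_nonneg_of_append_mem_Wp (x := s ++ [false]) (y := r) (by simpa using hp)
      have hr_neg := mu_neg_of_append_true_mem_Wm hv
      omega

/-- `(W_k⁺·a·Σ*) ∩ (Σ*·b·W_k⁻) = W_k⁺·a·Σ*·b·W_k⁻`: the distinguished occurrence of `a`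
may be chosen strictly before the distinguished occurrence of `b`. -/
theorem Wp_inter_Wm (k : ℕ) :
    (Wp k * la * ⊤) ⊓ (⊤ * lb * Wm k) = Wp k * la * ⊤ * lb * Wm k := by
  ext w
  simp only [la, lb, Language.mem_inf, mem_mul_singleton_mul_top, mem_top_mul_singleton_mul,
    mem_mul_singleton_mul_top_mul_singleton_mul]
  constructor
  · rintro ⟨⟨p, hp, t, rfl⟩, s, v, hv, hw⟩
    obtain ⟨r, rfl⟩ := exists_eq_append_true_of_append_eq hp hv hw
    exact ⟨p, hp, r, v, hv, by simpa using hw⟩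
  · rintro ⟨p, hp, r, v, hv, rfl⟩
    exact ⟨⟨p, hp, _, rfl⟩, p ++ true :: r, v, hv, by simp⟩

end ADTpaper
end
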